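/- Let z_0 ∈ 𝕋, c ∈ ℂ with c ≠ 0, and suppose z(w) = z_0 + c(w - w_0) + O((w - w_0)^2) near w_0. Fix C_13 > 0 with C_13 < |c| and let G = { w : |Re( conj(z_0) c (w - w_0) )| > C_13 |w - w_0| }. Then there exist ε > 0 and C_14 > 0 such that for all w ∈ G with |w - w_0| < ε, |1 - |z(w)|| ≥ C_14 |z(w) - z_0|. -/

import Mathlib

/-!
Write `u = z(w) - z₀` and `h = w - w₀`. Since `|z₀| = 1`,
`|z(w)|² - 1 = 2 Re(z̄₀ u) + |u|² = 2 Re(z̄₀ c h) + o(|h|)`,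
so in the domain `G`, where `|Re(z̄₀ c h)| > C₁₃ |h|`, the first term dominates and
`||z(w)|² - 1| ≥ C₁₃ |h|`. Dividing by `1 + |z(w)| ≤ 3` bounds `|1 - |z(w)||` below by a
multiple of `|h|`, hence of `|u| = O(|h|)`.
-/

open Filter Asymptotics Topology ComplexConjugate

lemma norm_sq_sub_one_eq_of_norm_eq_one {z0 : ℂ} (hz0 : ‖z0‖ = 1) (ζ : ℂ) :
    ‖ζ‖ ^ 2 - 1 = 2 * (conj z0 * (ζ - z0)).re + ‖ζ - z0‖ ^ 2 := by
  have h := norm_add_sq_real z0 (ζ - z0)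
  rw [Complex.inner, add_sub_cancel, hz0, mul_comm (ζ - z0)] at h
  linarith

lemma mul_le_three_mul_abs_one_sub {C a x A : ℝ} (hx : |x - 1| ≤ 1) (hA : C * a < |A|)
    (hf : |x ^ 2 - 1 - 2 * A| ≤ C * a) : C * a ≤ 3 * |1 - x| := by
  have hx0 : 0 ≤ 1 + x := by linarith [neg_abs_le (x - 1)]
  have hfactor : |x ^ 2 - 1| = |1 - x| * (1 + x) := by
    rw [← abs_of_nonneg hx0, ← abs_mul, abs_sub_comm]
    ring_nf
  have hlower : C * a ≤ |x ^ 2 - 1| := by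
    have h := abs_sub_abs_le_abs_sub (2 * A) (x ^ 2 - 1)
    rw [abs_mul, abs_two, abs_sub_comm (2 * A)] at h
    linarith
  have hx2 : 1 + x ≤ 3 := by linarith [le_abs_self (x - 1)]
  nlinarith [abs_nonneg (1 - x)]

section Expansion

variable {z0 c w0 : ℂ} {z : ℂ → ℂ}

lemma isBigO_sub_of_isBigO_sq
    (hz : (fun w => z w - z0 - c * (w - w0)) =O[𝓝 w0] fun w => ‖w - w0‖ ^ 2) :
    (fun w => z w - z0) =O[𝓝 w0] fun w => w - w0 := by
  have hr := hz.trans_isLittleO (isLittleO_pow_sub_sub w0 one_lt_two)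
  simpa using (isBigO_const_mul_self c (fun w => w - w0) (𝓝 w0)).add hr.isBigO

lemma tendsto_sub_of_isBigO_sq
    (hz : (fun w => z w - z0 - c * (w - w0)) =O[𝓝 w0] fun w => ‖w - w0‖ ^ 2) :
    Tendsto (fun w => z w - z0) (𝓝 w0) (𝓝 0) :=
  (isBigO_sub_of_isBigO_sq hz).trans_tendsto (tendsto_sub_nhds_zero_iff.2 tendsto_id)

lemma isLittleO_norm_sq_sub_one (hz0 : ‖z0‖ = 1)
    (hz : (fun w => z w - z0 - c * (w - w0)) =O[𝓝 w0] fun w => ‖w - w0‖ ^ 2) :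
    (fun w => ‖z w‖ ^ 2 - 1 - 2 * (conj z0 * c * (w - w0)).re) =o[𝓝 w0] fun w => w - w0 := by
  have hr := hz.trans_isLittleO (isLittleO_pow_sub_sub w0 one_lt_two)
  have hu := isBigO_sub_of_isBigO_sq hz
  have hre : (fun w => 2 * (conj z0 * (z w - z0 - c * (w - w0))).re) =o[𝓝 w0]
      fun w => w - w0 := by
    refine IsBigO.trans_isLittleO (IsBigO.of_bound 2 (Eventually.of_forall fun w => ?_)) hr
    rw [norm_mul, Real.norm_two, Real.norm_eq_abs]
    gcongr
    refine (Complex.abs_re_le_norm _).trans ?_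
    rw [norm_mul, RCLike.norm_conj, hz0, one_mul]
  have hsq : (fun w => ‖z w - z0‖ ^ 2) =o[𝓝 w0] fun w => w - w0 := by
    have hu0 : (fun w => ‖z w - z0‖) =o[𝓝 w0] fun _ => (1 : ℝ) :=
      (isLittleO_one_iff ℝ).2 <| by simpa using (tendsto_sub_of_isBigO_sq hz).norm
    simpa [sq, isLittleO_norm_right] using hu.norm_left.norm_right.mul_isLittleO hu0
  refine (hre.add hsq).congr_left fun w => ?_
  rw [norm_sq_sub_one_eq_of_norm_eq_one hz0, mul_sub, Complex.sub_re, mul_assoc]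
  ring

end Expansion

theorem stolz_angle_estimate_general (z0 c w0 : ℂ) (hz0 : ‖z0‖ = 1)
    (z : ℂ → ℂ)
    (hz : (fun w : ℂ => z w - z0 - c * (w - w0)) =O[𝓝 w0] fun w : ℂ => ‖w - w0‖ ^ 2)
    (C13 : ℝ) (hC13 : 0 < C13) :
    ∃ ε > 0, ∃ C14 > 0, ∀ w : ℂ,
      |((starRingEnd ℂ) z0 * c * (w - w0)).re| > C13 * ‖w - w0‖ →
      ‖w - w0‖ < ε →
      C14 * ‖z w - z0‖ ≤ |1 - ‖z w‖| := by
  obtain ⟨K, hK, huK⟩ := (isBigO_sub_of_isBigO_sq hz).exists_pos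
  have hu_small : ∀ᶠ w in 𝓝 w0, ‖z w - z0‖ ≤ 1 := by
    simpa using (tendsto_sub_of_isBigO_sq hz).eventually (Metric.closedBall_mem_nhds 0 one_pos)
  obtain ⟨ε, hε, hball⟩ := Metric.eventually_nhds_iff.1
    (huK.bound.and (hu_small.and ((isLittleO_norm_sq_sub_one hz0 hz).def hC13)))
  refine ⟨ε, hε, C13 / (3 * K), by positivity, fun w hG hw => ?_⟩
  obtain ⟨huw, hu1, hf⟩ := hball (by rwa [dist_eq_norm])
  have hnear : |‖z w‖ - 1| ≤ 1 := by
    simpa [hz0] using (abs_norm_sub_norm_le (z w) z0).trans hu1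
  have hmain := mul_le_three_mul_abs_one_sub hnear hG (by simpa using hf)
  calc C13 / (3 * K) * ‖z w - z0‖ ≤ C13 / (3 * K) * (K * ‖w - w0‖) := by gcongr
    _ = C13 * ‖w - w0‖ / 3 := by field_simp
    _ ≤ |1 - ‖z w‖| := by linarith

/-- Stolz angle estimate: if z(w) = z₀ + c(w - w₀) + O((w-w₀)²) with |z₀| = 1, c ≠ 0,
and 0 < C₁₃ < |c|, then for w in the non-tangential domain
G = { w : |Re(conj(z₀) c (w - w₀))| > C₁₃ |w - w₀| } close enough to w₀,
|1 - |z(w)|| ≥ C₁₄ |z(w) - z₀|. -/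
theorem stolz_angle_estimate (z0 c w0 : ℂ) (hz0 : ‖z0‖ = 1) (hc : c ≠ 0)
    (z : ℂ → ℂ)
    (hz : (fun w : ℂ => z w - z0 - c * (w - w0)) =O[𝓝 w0] fun w : ℂ => ‖w - w0‖ ^ 2)
    (C13 : ℝ) (hC13 : 0 < C13) (hC13' : C13 < ‖c‖) :
    ∃ ε > 0, ∃ C14 > 0, ∀ w : ℂ,
      |((starRingEnd ℂ) z0 * c * (w - w0)).re| > C13 * ‖w - w0‖ →
      ‖w - w0‖ < ε →
      C14 * ‖z w - z0‖ ≤ |1 - ‖z w‖| :=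
  stolz_angle_estimate_general z0 c w0 hz0 z hz C13 hC13
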